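/- arXiv:2208.06602 — 3 statements merged into one kernel-verified Lean document; each statement's English description precedes it below -/
import Mathlib

section
/- The Hermite constant satisfies γ_n ≤ n for every n ≥ 1, i.e., for every full-rank lattice Λ in ℝ^n the shortest nonzero vector length δ₁(Λ) satisfies δ₁(Λ)^n ≤ n^{n/2}·Vol(Λ). -/
open MeasureTheory

/-!
Choose `r` with `r ^ n = covol Λ`. The cube `[-r, r]ⁿ` has volume `2ⁿ covol Λ`, so the closed
ball of radius `√n r` containing it is large enough for Minkowski's convex body theorem, which
yields a nonzero lattice vector of norm at most `√n r`; raising to the `n`-th power gives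
`δ₁(Λ)ⁿ ≤ n^{n/2} covol Λ`.
-/

open Module in
theorem ZLattice.exists_ne_zero_mem_of_covolume_mul_two_pow_le {E : Type*} [NormedAddCommGroup E]
    [NormedSpace ℝ E] [FiniteDimensional ℝ E] [Nontrivial E] [MeasurableSpace E] [BorelSpace E]
    (L : Submodule ℤ E) [DiscreteTopology L] [IsZLattice ℝ L]
    (μ : Measure E) [μ.IsAddHaarMeasure] {s : Set E}
    (h_symm : ∀ x ∈ s, -x ∈ s) (h_conv : Convex ℝ s) (h_cpt : IsCompact s)
    (h : ENNReal.ofReal (covolume L μ) * 2 ^ finrank ℝ E ≤ μ s) :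
    ∃ x ∈ L, x ≠ 0 ∧ x ∈ s := by
  have fund := ZLattice.isAddFundamentalDomain (Free.chooseBasis ℤ L) μ
  rw [covolume_eq_measure_fundamentalDomain L μ fund,
    ofReal_measureReal (ZSpan.fundamentalDomain_isBounded _).measure_lt_top.ne] at h
  have : Countable L.toAddSubgroup := inferInstanceAs (Countable L)
  have : DiscreteTopology L.toAddSubgroup := inferInstanceAs (DiscreteTopology L)
  obtain ⟨⟨x, hxL⟩, hx0, hxs⟩ := exists_ne_zero_mem_lattice_of_measure_mul_two_pow_le_measure
    (L := L.toAddSubgroup) fund h_symm h_conv h_cpt h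
  exact ⟨x, hxL, by simpa using hx0, hxs⟩

theorem EuclideanSpace.norm_le_sqrt_card_mul_norm_ofLp {ι : Type*} [Fintype ι]
    (x : EuclideanSpace ℝ ι) : ‖x‖ ≤ √(Fintype.card ι) * ‖WithLp.ofLp x‖ := by
  simpa [Real.sqrt_eq_rpow] using
    (PiLp.lipschitzWith_toLp 2 (fun _ : ι ↦ ℝ)).norm_le_mul rfl (WithLp.ofLp x)

theorem EuclideanSpace.volume_cube_le_volume_closedBall {ι : Type*} [Fintype ι] {r : ℝ}
    (hr : 0 ≤ r) :
    ENNReal.ofReal ((2 * r) ^ Fintype.card ι) ≤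
      volume (Metric.closedBall (0 : EuclideanSpace ℝ ι) (√(Fintype.card ι) * r)) := by
  rw [← Real.volume_pi_closedBall 0 hr, ← (PiLp.volume_preserving_ofLp ι).measure_preimage
    measurableSet_closedBall.nullMeasurableSet]
  refine measure_mono fun x hx ↦ ?_
  simp only [Set.mem_preimage, mem_closedBall_zero_iff] at hx ⊢
  exact (norm_le_sqrt_card_mul_norm_ofLp x).trans (by gcongr)

theorem sInf_norm_le_norm {E : Type*} [SeminormedAddGroup E] {S : Set E} {v : E} (hv : v ∈ S)
    (hv0 : v ≠ 0) : sInf {r : ℝ | ∃ v ∈ S, v ≠ 0 ∧ ‖v‖ = r} ≤ ‖v‖ :=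
  csInf_le ⟨0, by rintro _ ⟨w, -, -, rfl⟩; exact norm_nonneg w⟩ ⟨v, hv, hv0, rfl⟩

/-- Hermite's bound `γ_n ≤ n`: for every full-rank lattice `Λ` in `ℝ^n` (`n ≥ 1`),
the length `δ₁(Λ)` of a shortest nonzero lattice vector satisfies
`δ₁(Λ)^n ≤ n^{n/2} · Vol(Λ)`. -/
theorem hermite_constant_le (n : ℕ) (hn : 1 ≤ n)
    (Λ : Submodule ℤ (EuclideanSpace ℝ (Fin n)))
    [DiscreteTopology Λ] [IsZLattice ℝ Λ] :
    (sInf {r : ℝ | ∃ v ∈ Λ, v ≠ 0 ∧ ‖v‖ = r}) ^ n ≤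
      (n:ℝ) ^ ((n:ℝ) / 2) * ZLattice.covolume Λ volume := by
  have : Nontrivial (EuclideanSpace ℝ (Fin n)) := by
    have : Nonempty (Fin n) := Fin.pos_iff_nonempty.mp hn; infer_instance
  set V := ZLattice.covolume Λ volume
  have hV : 0 ≤ V := (ZLattice.covolume_pos Λ volume).le
  set r := V ^ (n⁻¹ : ℝ)
  have hr : 0 ≤ r := Real.rpow_nonneg hV _
  have hrn : r ^ n = V := Real.rpow_inv_natCast_pow hV (by omega)
  have hvol : ENNReal.ofReal V * 2 ^ Module.finrank ℝ (EuclideanSpace ℝ (Fin n)) ≤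
      volume (Metric.closedBall (0 : EuclideanSpace ℝ (Fin n)) (√n * r)) := by
    convert EuclideanSpace.volume_cube_le_volume_closedBall (ι := Fin n) hr using 1
    · rw [finrank_euclideanSpace_fin, Fintype.card_fin, mul_pow, hrn, mul_comm,
        ENNReal.ofReal_mul (by positivity), ENNReal.ofReal_pow zero_le_two, ENNReal.ofReal_ofNat]
    · rw [Fintype.card_fin]
  obtain ⟨x, hxΛ, hx0, hx⟩ := ZLattice.exists_ne_zero_mem_of_covolume_mul_two_pow_le Λ volume
    (fun x hx ↦ by simpa using hx) (convex_closedBall 0 _) (isCompact_closedBall 0 _) hvol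
  rw [mem_closedBall_zero_iff] at hx
  calc (sInf {r : ℝ | ∃ v ∈ Λ, v ≠ 0 ∧ ‖v‖ = r}) ^ n
      ≤ ‖x‖ ^ n := by
        gcongr
        · exact Real.sInf_nonneg (by rintro _ ⟨v, -, -, rfl⟩; exact norm_nonneg v)
        · exact sInf_norm_le_norm (S := Λ) hxΛ hx0
    _ ≤ (√n * r) ^ n := by gcongr
    _ = (n:ℝ) ^ ((n:ℝ) / 2) * V := by
        rw [mul_pow, hrn, Real.sqrt_eq_rpow, ← Real.rpow_natCast, ← Real.rpow_mul (by positivity),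
          one_div_mul_eq_div]
end

section
/- Let x = (x₁,…,x_{r₁+r₂}) ∈ ℝ^{r₁} × ℂ^{r₂} lie in the region F(0,1/m₁,…,0,1/m_r,X), i.e. its coordinates satisfy |x_i| = α(x)^{1/n}·∏_{j=1}^r |σ_i(η_j)|^{α_{j+1}(x)} with 0 < α(x) ≤ X and 0 ≤ α_{j+1}(x) < 1/m_j for each j. Then, identifying x with a point of ℝ^n via real and imaginary parts, its Euclidean norm satisfies ‖h'(x)‖ ≤ √(r+1)·e^r·X^{1/n}. -/
/-!
Since `log |σ_i(η_j)| ≤ m_j` and `0 ≤ α_{j+1} < 1/m_j`, each factor `|σ_i(η_j)|^{α_{j+1}}` is at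
most `e`, so each of the `r₁ + r₂ = r + 1` coordinates of `x` has absolute value at most
`e^r X^{1/n}`; `‖h'(x)‖²` is the sum of their squares.
-/

open Real

lemma rpow_le_exp_mul_of_log_le {x a M : ℝ} (hx : 0 < x) (ha : 0 ≤ a) (hM : log x ≤ M) :
    x ^ a ≤ exp (a * M) := by
  rw [rpow_def_of_pos hx, mul_comm]
  exact exp_le_exp.2 (mul_le_mul_of_nonneg_left hM ha)

lemma prod_rpow_le_exp_card {ι : Type*} [Fintype ι] {x a M : ι → ℝ} (hx : ∀ j, 0 < x j)
    (ha : ∀ j, 0 ≤ a j) (hM : ∀ j, log (x j) ≤ M j) (haM : ∀ j, a j * M j ≤ 1) :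
    ∏ j, x j ^ a j ≤ exp (Fintype.card ι) := by
  calc ∏ j, x j ^ a j ≤ ∏ _j : ι, exp 1 := by
        refine Finset.prod_le_prod (fun j _ => (rpow_pos_of_pos (hx j) _).le) fun j _ => ?_
        exact (rpow_le_exp_mul_of_log_le (hx j) (ha j) (hM j)).trans (exp_le_exp.2 (haM j))
    _ = exp (Fintype.card ι) := by rw [Finset.prod_const, Finset.card_univ, exp_one_pow]

lemma rpow_mul_prod_rpow_le_exp_card_mul {ι : Type*} [Fintype ι] {α X p : ℝ} {x a M : ι → ℝ}
    (hα : 0 < α) (hαX : α ≤ X) (hp : 0 ≤ p) (hx : ∀ j, 0 < x j) (ha : ∀ j, 0 ≤ a j)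
    (hM : ∀ j, log (x j) ≤ M j) (haM : ∀ j, a j * M j ≤ 1) :
    α ^ p * ∏ j, x j ^ a j ≤ exp (Fintype.card ι) * X ^ p := by
  have hX : 0 < X := hα.trans_le hαX
  rw [mul_comm (exp _)]
  exact mul_le_mul (rpow_le_rpow hα.le hαX hp) (prod_rpow_le_exp_card hx ha hM haM)
    (Finset.prod_nonneg fun j _ => (rpow_pos_of_pos (hx j) _).le) (by positivity)

lemma sqrt_sum_le_sqrt_card_mul {ι : Type*} [Fintype ι] (f : ι → ℝ) {B : ℝ} (hB : 0 ≤ B)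
    (hf : ∀ i, f i ≤ B ^ 2) : √(∑ i, f i) ≤ √(Fintype.card ι) * B := by
  calc √(∑ i, f i) ≤ √(Fintype.card ι * B ^ 2) := by
        refine sqrt_le_sqrt ?_
        simpa using Finset.sum_le_card_nsmul Finset.univ f _ fun i _ => hf i
    _ = √(Fintype.card ι) * B := by rw [sqrt_mul (Nat.cast_nonneg _), sqrt_sq hB]

theorem norm_bound_in_F_general (r₁ r₂ n r : ℕ)
    (hr : r + 1 = r₁ + r₂)
    (m : Fin r → ℕ) (hm : ∀ j, 1 ≤ m j)
    (E : (Fin r₁ ⊕ Fin r₂) → Fin r → ℝ)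
    (hEpos : ∀ i j, 0 < E i j) (hE : ∀ i j, Real.log (E i j) ≤ m j)
    (X : ℝ)
    (α : ℝ) (hα : 0 < α) (hαX : α ≤ X)
    (a : Fin r → ℝ) (ha : ∀ j, 0 ≤ a j) (ha' : ∀ j, a j < 1 / (m j : ℝ))
    (xre : Fin r₁ → ℝ) (xc : Fin r₂ → ℂ)
    (hre : ∀ i, |xre i| = α ^ ((1:ℝ) / n) * ∏ j, E (Sum.inl i) j ^ (a j))
    (hc : ∀ i, ‖xc i‖ = α ^ ((1:ℝ) / n) * ∏ j, E (Sum.inr i) j ^ (a j)) :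
    Real.sqrt (∑ i, (xre i) ^ 2 + ∑ i, ((xc i).re ^ 2 + (xc i).im ^ 2)) ≤
      Real.sqrt ((r:ℝ) + 1) * Real.exp r * X ^ ((1:ℝ) / n) := by
  set B := exp r * X ^ ((1:ℝ) / n)
  have hB : 0 ≤ B := by have := hα.trans_le hαX; positivity
  have ham : ∀ j, a j * m j ≤ 1 := fun j =>
    ((lt_div_iff₀ (by exact_mod_cast hm j)).1 (ha' j)).le
  have hcoord : ∀ i, α ^ ((1:ℝ) / n) * ∏ j, E i j ^ a j ≤ B := fun i => by
    simpa [B] using rpow_mul_prod_rpow_le_exp_card_mul hα hαX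
      (by positivity : (0:ℝ) ≤ 1 / n) (hEpos i) ha (hE i) ham
  have hsq : ∀ i, Sum.elim (fun i => xre i ^ 2) (fun i => (xc i).re ^ 2 + (xc i).im ^ 2) i ≤
      B ^ 2 := by
    rintro (i | i)
    · rw [Sum.elim_inl, ← sq_abs]
      exact pow_le_pow_left₀ (abs_nonneg _) ((hre i).trans_le (hcoord _)) 2
    · have hnorm : (xc i).re ^ 2 + (xc i).im ^ 2 = ‖xc i‖ ^ 2 := by
        rw [Complex.sq_norm, Complex.normSq_apply]; ring
      rw [Sum.elim_inr, hnorm]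
      exact pow_le_pow_left₀ (norm_nonneg _) ((hc i).trans_le (hcoord _)) 2
  have hcard : ((Fintype.card (Fin r₁ ⊕ Fin r₂) : ℕ) : ℝ) = r + 1 := by
    simp only [Fintype.card_sum, Fintype.card_fin]; exact_mod_cast hr.symm
  have hsqrt := sqrt_sum_le_sqrt_card_mul _ hB hsq
  rwa [Fintype.sum_sum_type, hcard, ← mul_assoc] at hsqrt

/-- Lemma: a point `x = (x₁,…,x_{r₁+r₂}) ∈ ℝ^{r₁} × ℂ^{r₂}` of the region
`F(0,1/m₁,…,0,1/m_r,X)`, i.e. whose coordinates satisfy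
`|x_i| = α^{1/n}·∏_j E_{ij}^{a_j}` with `0 < α ≤ X`, `0 ≤ a_j < 1/m_j`, where
`E_{ij} = |σ_i(η_j)|` satisfies `log E_{ij} ≤ m_j`, has Euclidean norm (after
identifying `ℂ` with `ℝ²`) at most `√(r+1)·e^r·X^{1/n}`. -/
theorem norm_bound_in_F (r₁ r₂ n r : ℕ) (hn : n = r₁ + 2 * r₂) (hn1 : 1 ≤ n)
    (hr : r + 1 = r₁ + r₂)
    (m : Fin r → ℕ) (hm : ∀ j, 1 ≤ m j)
    (E : (Fin r₁ ⊕ Fin r₂) → Fin r → ℝ)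
    (hEpos : ∀ i j, 0 < E i j) (hE : ∀ i j, Real.log (E i j) ≤ m j)
    (X : ℝ) (hX : 0 < X)
    (α : ℝ) (hα : 0 < α) (hαX : α ≤ X)
    (a : Fin r → ℝ) (ha : ∀ j, 0 ≤ a j) (ha' : ∀ j, a j < 1 / (m j : ℝ))
    (xre : Fin r₁ → ℝ) (xc : Fin r₂ → ℂ)
    (hre : ∀ i, |xre i| = α ^ ((1:ℝ) / n) * ∏ j, E (Sum.inl i) j ^ (a j))
    (hc : ∀ i, ‖xc i‖ = α ^ ((1:ℝ) / n) * ∏ j, E (Sum.inr i) j ^ (a j)) :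
    Real.sqrt (∑ i, (xre i) ^ 2 + ∑ i, ((xc i).re ^ 2 + (xc i).im ^ 2)) ≤
      Real.sqrt ((r:ℝ) + 1) * Real.exp r * X ^ ((1:ℝ) / n) :=
  norm_bound_in_F_general r₁ r₂ n r hr m hm E hEpos hE X α hα hαX a ha ha' xre xc hre hc
end

section
/- Let K be a number field of degree n ≥ 2 and let 𝔞, 𝔮 be coprime integral ideals. By Minkowski's lattice point theorem there exists a nonzero a ∈ 𝔞𝔮 with |N(a)| < (2/π)^{r₂}·√|d_K|·N(𝔞𝔮), and consequently, for any vector k ∈ ∏_j [0,m_j) ∩ ℤ, there is a unit u ∈ O_K^* such that the twisted embedding of a·u^{−1} satisfies ‖φ(a·u^{−1})·β_k‖ ≤ |N(a)|^{1/n}·√(r+1)·e^{∑_{j=1}^r m_j}, where β_k = (∏_j |σ_i(η_j)|^{−k_j/m_j})_i. -/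
/-!
Minkowski's convex-body theorem gives a nonzero `a ∈ 𝔞𝔮` with
`|N(a)| ≤ (2/π)^{r₂} √|d_K| N(𝔞𝔮) · n! 2^{r₂} / n^n`. The last factor is `< 1` except for
imaginary quadratic fields, where it is `1` and equality would make `π²` rational.

For the twist, Dirichlet's unit theorem writes `(log w(a) - log |N(a)| / n)_w`, a vector of
weighted sum zero, as `∑ t_j (log w(η_j))_w`. Dividing `a` by `∏ η_j ^ ⌊t_j - k_j/m_j⌋` leaves
`|N(a)|^{1/n} ∏ w(η_j)^{s_j}` at every place `w`, with `0 ≤ s_j < 1`, and this is at most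
`|N(a)|^{1/n} e^{∑ m_j}`.
-/

open NumberField NumberField.Units NumberField.InfinitePlace Real
open scoped Nat

section PiSq

open Polynomial Complex Filter

theorem exists_intCast_eq_pow_mul_aeval_add_aeval_neg {z : ℂ} {a b : ℤ}
    (hz : (b : ℂ) * z ^ 2 = a) {g : ℤ[X]} {p : ℕ} (hg : g.natDegree < 2 * p) :
    ∃ Z : ℤ, (b : ℂ) ^ p * (aeval z g + aeval (-z) g) = Z := by
  refine ⟨∑ i ∈ Finset.range (g.natDegree + 1),
    g.coeff i * if Even i then 2 * a ^ (i / 2) * b ^ (p - i / 2) else 0, ?_⟩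
  rw [aeval_eq_sum_range, aeval_eq_sum_range, ← Finset.sum_add_distrib, Finset.mul_sum]
  push_cast
  refine Finset.sum_congr rfl fun i hi => ?_
  have hip : i / 2 ≤ p := by
    have := Finset.mem_range.mp hi
    omega
  obtain ⟨j, rfl | rfl⟩ := Nat.even_or_odd' i
  · have hj : 2 * j / 2 = j := by omega
    simp only [zsmul_eq_mul, even_two_mul, if_true, hj, pow_mul, neg_sq]
    rw [hj] at hip
    rw [← hz, mul_pow, ← pow_sub_mul_pow (b : ℂ) hip]
    ring
  · simp only [zsmul_eq_mul, Nat.not_even_two_mul_add_one, if_false, (Odd.neg_pow ⟨j, rfl⟩ z)]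
    ring

theorem exists_prime_gt_two_mul_pow_div_factorial_lt_one (x : ℝ) (N : ℕ) :
    ∃ p, N < p ∧ p.Prime ∧ 2 * x ^ p / (p - 1)! < 1 := by
  have hlim : Tendsto (fun p => 2 * x * (x ^ (p - 1) / (p - 1)!)) atTop (nhds 0) := by
    simpa using ((FloorSemiring.tendsto_pow_div_factorial_atTop x).comp
      (tendsto_sub_atTop_nat 1)).const_mul (2 * x)
  obtain ⟨M, hM⟩ := eventually_atTop.mp (hlim.eventually_lt_const one_pos)
  obtain ⟨p, hp, hprime⟩ := Nat.exists_infinite_primes (max M 1 + N + 1)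
  refine ⟨p, by omega, hprime, ?_⟩
  obtain ⟨k, rfl⟩ : ∃ k, p = k + 1 := ⟨p - 1, by omega⟩
  calc 2 * x ^ (k + 1) / (k + 1 - 1)! = 2 * x * (x ^ (k + 1 - 1) / (k + 1 - 1)!) := by
        simp only [Nat.add_sub_cancel]
        ring
    _ < 1 := hM (k + 1) (by omega)

/-- If `π² = a / b`, then `±πi` are roots of `b X² + a ∈ ℤ[X]`; the Lindemann–Weierstrass
approximations of `exp (±πi) = -1` at a large prime `p` combine into an integer `2 n b^p + p Z`
that is not divisible by `p` but has absolute value `< 1`. -/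
theorem irrational_pi_sq : Irrational (π ^ 2) := by
  rintro ⟨q, hq⟩
  have hq0 : q.num ≠ 0 := Rat.num_ne_zero.mpr (by
    have : (0 : ℝ) < q := hq ▸ by positivity
    exact_mod_cast this.ne')
  set f : ℤ[X] := C (q.den : ℤ) * X ^ 2 + C q.num
  have hf0 : f.eval 0 ≠ 0 := by simpa [f] using hq0
  have hfdeg : f.natDegree ≤ 2 := by simp only [f]; compute_degree
  have hroot : (q.den : ℂ) * (π * I) ^ 2 = -q.num := by
    have h : (q : ℂ) * q.den = q.num := by exact_mod_cast Rat.mul_den_eq_num q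
    have hπ : (π : ℂ) ^ 2 = q := by exact_mod_cast hq.symm
    rw [mul_pow, I_sq, hπ]
    linear_combination -h
  have hmem (r : ℂ) (hr : r ^ 2 = (π * I) ^ 2) : r ∈ f.aroots ℂ := by
    rw [mem_aroots]
    refine ⟨fun h => hf0 (by simp [h]), ?_⟩
    simp only [map_natCast, eq_intCast, map_add, map_mul, map_pow, aeval_X, hr, map_intCast, f]
    linear_combination hroot
  obtain ⟨c, hc⟩ := LindemannWeierstrass.exp_polynomial_approx f hf0
  obtain ⟨p, hpN, hp, hsmall⟩ := exists_prime_gt_two_mul_pow_div_factorial_lt_one (q.den * c)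
    ((f.eval 0).natAbs + q.den + 2)
  obtain ⟨n, hpn, g, hgdeg, hg⟩ := hc p (by omega) hp
  have hg2 : g.natDegree < 2 * p := by
    have := Nat.mul_le_mul_left p hfdeg
    have := hp.pos
    omega
  obtain ⟨Z, hZ⟩ :=
    exists_intCast_eq_pow_mul_aeval_add_aeval_neg (a := -q.num) (by push_cast; exact hroot) hg2
  have h1 := hg (hmem (π * I) rfl)
  have h2 := hg (hmem (-(π * I)) (by ring))
  rw [exp_pi_mul_I] at h1
  rw [Complex.exp_neg, exp_pi_mul_I] at h2
  simp only [zsmul_eq_mul, nsmul_eq_mul, inv_neg, inv_one] at h1 h2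
  have hM : (((2 * n * q.den ^ p + p * Z : ℤ)) : ℂ) =
      -(q.den : ℂ) ^ p * ((n * -1 - p * aeval (π * I) g) + (n * -1 - p * aeval (-(π * I)) g)) := by
    push_cast at hZ ⊢
    rw [← hZ]
    ring
  have hlt : |((2 * n * q.den ^ p + p * Z : ℤ) : ℝ)| < 1 := by
    rw [← Complex.norm_intCast, hM, norm_mul, norm_neg, norm_pow, Complex.norm_natCast]
    calc (q.den : ℝ) ^ p * ‖_ + _‖ ≤ (q.den : ℝ) ^ p * (c ^ p / (p - 1)! + c ^ p / (p - 1)!) := by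
          gcongr
          exact (norm_add_le _ _).trans (add_le_add h1 h2)
      _ = 2 * (q.den * c) ^ p / (p - 1)! := by ring
      _ < 1 := hsmall
  have hzero : 2 * n * q.den ^ p + p * Z = 0 := Int.abs_lt_one_iff.mp (by exact_mod_cast hlt)
  have hdvd : (p : ℤ) ∣ 2 * n * q.den ^ p := by
    rw [← neg_eq_of_add_eq_zero_left hzero]
    exact (dvd_mul_right _ _).neg_right
  have hpZ := Nat.prime_iff_prime_int.mp hp
  rcases hpZ.dvd_or_dvd hdvd with h | h
  · rcases hpZ.dvd_or_dvd h with h | h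
    · have := Int.le_of_dvd two_pos h
      omega
    · exact hpn h
  · have := Int.le_of_dvd (by positivity) (hpZ.dvd_of_dvd_pow h)
    omega

theorem irrational_two_div_pi_mul_sqrt_mul {D N : ℚ} (hD : 0 < D) (hN : N ≠ 0) :
    Irrational (2 / π * √D * N) := by
  rintro ⟨x, hx⟩
  have hx0 : (x : ℝ) ≠ 0 := by
    rw [hx]
    have : (0 : ℝ) < D := by exact_mod_cast hD
    have : (N : ℝ) ≠ 0 := by exact_mod_cast hN
    positivity
  refine irrational_pi_sq ⟨4 * D * N ^ 2 / x ^ 2, ?_⟩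
  push_cast
  rw [hx, mul_pow, mul_pow, div_pow, sq_sqrt (by exact_mod_cast hD.le)]
  field_simp
  ring

end PiSq

theorem two_mul_pow_le_add_one_pow {n : ℕ} (hn : n ≠ 0) : 2 * n ^ n ≤ (n + 1) ^ n := by
  have hn' : (0 : ℝ) < n := by positivity
  have h := mul_add_one_le_add_one_pow (inv_nonneg.mpr hn'.le) n
  rw [inv_mul_cancel₀ hn'.ne', one_add_one_eq_two] at h
  have hpow : ((n : ℝ)⁻¹ + 1) ^ n * n ^ n = (n + 1) ^ n := by
    rw [← mul_pow]
    field_simp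
    ring
  exact_mod_cast (mul_le_mul_of_nonneg_right h (by positivity)).trans_eq hpow

theorem factorial_mul_two_pow_pred_lt_pow {n : ℕ} (hn : 3 ≤ n) : n ! * 2 ^ (n - 1) < n ^ n := by
  induction n, hn using Nat.le_induction with
  | base => decide
  | succ n hn ih =>
    calc (n + 1)! * 2 ^ (n + 1 - 1) = (n + 1) * (2 * (n ! * 2 ^ (n - 1))) := by
          obtain ⟨k, rfl⟩ : ∃ k, n = k + 1 := ⟨n - 1, by omega⟩
          rw [Nat.factorial_succ, Nat.add_sub_cancel, Nat.add_sub_cancel, pow_succ]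
          ring
      _ < (n + 1) * (2 * n ^ n) := by gcongr
      _ ≤ (n + 1) * (n + 1) ^ n := by gcongr; exact two_mul_pow_le_add_one_pow (by omega)
      _ = (n + 1) ^ (n + 1) := by ring

theorem factorial_mul_two_pow_lt_pow {n r : ℕ} (hn : 2 ≤ n) (hr : 2 * r ≤ n)
    (h : ¬(n = 2 ∧ r = 1)) : n ! * 2 ^ r < n ^ n := by
  rcases hn.eq_or_lt with rfl | hn
  · obtain rfl : r = 0 := by omega
    decide
  · calc n ! * 2 ^ r ≤ n ! * 2 ^ (n - 1) := by gcongr <;> omega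
      _ < n ^ n := factorial_mul_two_pow_pred_lt_pow hn

theorem mul_log_le_of_log_le {s y m : ℝ} (hs0 : 0 ≤ s) (hs1 : s ≤ 1) (hy : Real.log y ≤ m)
    (hm : 0 ≤ m) : s * Real.log y ≤ m := by
  rcases le_total 0 (Real.log y) with h | h <;> nlinarith

theorem sqrt_sum_sq_le_sqrt_card_mul {ι : Type*} [Fintype ι] {f : ι → ℝ} {M : ℝ}
    (hf : ∀ i, |f i| ≤ M) : √(∑ i, f i ^ 2) ≤ √(Fintype.card ι) * M := by
  have hsum : ∑ i, f i ^ 2 ≤ Fintype.card ι * M ^ 2 := by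
    refine (Finset.sum_le_sum fun i _ => sq_le_sq.mpr ((hf i).trans (le_abs_self M))).trans_eq ?_
    simp
  calc √(∑ i, f i ^ 2) ≤ √(Fintype.card ι * M ^ 2) := Real.sqrt_le_sqrt hsum
    _ = √(Fintype.card ι) * |M| := by rw [Real.sqrt_mul (Nat.cast_nonneg _), Real.sqrt_sq_eq_abs]
    _ = √(Fintype.card ι) * M := by
      rcases isEmpty_or_nonempty ι with _ | ⟨⟨i⟩⟩
      · simp
      · rw [abs_of_nonneg ((abs_nonneg _).trans (hf i))]

namespace NumberField

variable {K : Type*} [Field K]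

theorem Units.coe_prod_zpow {ι : Type*} [Fintype ι] (η : ι → (𝓞 K)ˣ) (c : ι → ℤ) :
    ((∏ j, η j ^ c j : (𝓞 K)ˣ) : K) = ∏ j, (η j : K) ^ c j := by
  simp [← coe_zpow]

theorem Units.log_apply_prod_zpow {ι : Type*} [Fintype ι] (w : InfinitePlace K) (η : ι → (𝓞 K)ˣ)
    (c : ι → ℤ) :
    Real.log (w ((∏ j, η j ^ c j : (𝓞 K)ˣ) : K)) = ∑ j, c j * Real.log (w (η j)) := by
  rw [Units.coe_prod_zpow, map_prod]
  simp only [map_zpow₀]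
  rw [Real.log_prod fun j _ => (zpow_pos (pos_at_place _ w) _).ne']
  simp only [Real.log_zpow]

variable [NumberField K]

theorem sum_mult_mul_log_eq_log_abs_norm {x : K} (hx : x ≠ 0) :
    ∑ w : InfinitePlace K, (mult w : ℝ) * Real.log (w x) = Real.log |(Algebra.norm ℚ x : ℝ)| := by
  rw [← Rat.cast_abs, ← prod_eq_abs_norm,
    Real.log_prod fun w _ => pow_ne_zero _ (pos_iff.mpr hx).ne']
  simp only [Real.log_pow]

theorem card_infinitePlace_eq_rank_add_one :
    Fintype.card (InfinitePlace K) = Units.rank K + 1 :=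
  (Nat.sub_add_cancel Fintype.card_pos).symm

theorem exists_ne_zero_mem_ideal_abs_norm_le {I : Ideal (𝓞 K)} (hI : I ≠ ⊥) :
    ∃ a ∈ I, a ≠ 0 ∧ (|Algebra.norm ℚ ((a : 𝓞 K) : K)| : ℝ) ≤
      (2 / π) ^ nrComplexPlaces K * √|(discr K : ℝ)| * Ideal.absNorm I *
        ((Module.finrank ℚ K)! * 2 ^ nrComplexPlaces K /
          Module.finrank ℚ K ^ Module.finrank ℚ K) := by
  obtain ⟨x, hxI, hx0, hxle⟩ := exists_ne_zero_mem_ideal_of_norm_le_mul_sqrt_discr K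
    (FractionalIdeal.mk0 K ⟨I, mem_nonZeroDivisors_of_ne_zero hI⟩)
  rw [FractionalIdeal.coe_mk0] at hxI
  obtain ⟨a, haI, rfl⟩ := (FractionalIdeal.mem_coeIdeal _).mp hxI
  refine ⟨a, haI, by rintro rfl; simp at hx0, ?_⟩
  rw [FractionalIdeal.coe_mk0, FractionalIdeal.coeIdeal_absNorm] at hxle
  have h4 : (4 / π) ^ nrComplexPlaces K = (2 / π) ^ nrComplexPlaces K * 2 ^ nrComplexPlaces K := by
    rw [← mul_pow]
    ring
  rw [← Rat.cast_abs]
  refine hxle.trans_eq ?_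
  rw [h4]
  push_cast
  ring

theorem exists_ne_zero_mem_ideal_abs_norm_lt (hK : 2 ≤ Module.finrank ℚ K) {I : Ideal (𝓞 K)}
    (hI : I ≠ ⊥) :
    ∃ a ∈ I, a ≠ 0 ∧ (|Algebra.norm ℚ ((a : 𝓞 K) : K)| : ℝ) <
      (2 / π) ^ nrComplexPlaces K * √|(discr K : ℝ)| * Ideal.absNorm I := by
  obtain ⟨a, haI, ha0, hle⟩ := exists_ne_zero_mem_ideal_abs_norm_le hI
  refine ⟨a, haI, ha0, ?_⟩
  have hN : 0 < Ideal.absNorm I := Nat.pos_of_ne_zero (Ideal.absNorm_eq_zero_iff.not.mpr hI)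
  have hD : (0 : ℚ) < |(discr K : ℚ)| := abs_pos.mpr (by exact_mod_cast discr_ne_zero K)
  by_cases hexc : Module.finrank ℚ K = 2 ∧ nrComplexPlaces K = 1
  · rw [hexc.1, hexc.2] at hle
    rw [hexc.2, pow_one]
    norm_num [Nat.factorial] at hle
    refine hle.lt_of_ne ?_
    have := (irrational_two_div_pi_mul_sqrt_mul hD (N := Ideal.absNorm I)
      (by exact_mod_cast hN.ne')).ne_rat |Algebra.norm ℚ ((a : 𝓞 K) : K)|
    push_cast at this
    exact fun h => this h.symm
  · have hq : ((Module.finrank ℚ K)! * 2 ^ nrComplexPlaces K /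
        Module.finrank ℚ K ^ Module.finrank ℚ K : ℝ) < 1 := by
      rw [div_lt_one (by positivity)]
      exact_mod_cast factorial_mul_two_pow_lt_pow hK
        (by have := card_add_two_mul_card_eq_rank K; omega) hexc
    refine hle.trans_lt (mul_lt_of_lt_one_right ?_ hq)
    have : (0 : ℝ) < |(discr K : ℝ)| := by exact_mod_cast hD
    have : (0 : ℝ) < Ideal.absNorm I := by exact_mod_cast hN
    positivity

namespace Units

open dirichletUnitTheorem

variable {ι : Type*} [Fintype ι] {η : ι → (𝓞 K)ˣ}

theorem span_logEmbedding_eq_top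
    (hgen : ∀ u : (𝓞 K)ˣ, ∃ ζ ∈ torsion K, ∃ c : ι → ℤ, u = ζ * ∏ j, η j ^ c j) :
    Submodule.span ℝ (Set.range fun j => logEmbedding K (Additive.ofMul (η j))) = ⊤ := by
  rw [eq_top_iff, ← unitLattice_span_eq_top K, Submodule.span_le]
  rintro _ ⟨u, -, rfl⟩
  obtain ⟨ζ, hζ, c, hu⟩ := hgen u.toMul
  have hlog : logEmbedding K u = ∑ j, (c j : ℝ) • logEmbedding K (Additive.ofMul (η j)) := by
    rw [← ofMul_toMul u, hu, ofMul_mul, map_add, logEmbedding_eq_zero_iff.mpr hζ, zero_add,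
      ofMul_prod, map_sum]
    simp [ofMul_zpow, map_zsmul, Int.cast_smul_eq_zsmul]
  exact hlog ▸ Submodule.sum_mem _ fun j _ =>
    Submodule.smul_mem _ _ (Submodule.subset_span ⟨j, rfl⟩)

theorem exists_eq_sum_mul_log_of_sum_mult_mul_eq_zero
    (hgen : ∀ u : (𝓞 K)ˣ, ∃ ζ ∈ torsion K, ∃ c : ι → ℤ, u = ζ * ∏ j, η j ^ c j)
    {v : InfinitePlace K → ℝ} (hv : ∑ w, (mult w : ℝ) * v w = 0) :
    ∃ t : ι → ℝ, ∀ w, v w = ∑ j, t j * Real.log (w (η j)) := by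
  classical
  obtain ⟨t, ht⟩ := (Submodule.mem_span_range_iff_exists_fun ℝ).mp
    ((span_logEmbedding_eq_top hgen).ge (Submodule.mem_top (x := fun w => mult w.1 * v w.1)))
  refine ⟨t, fun w => sub_eq_zero.mp ?_⟩
  set F : InfinitePlace K → ℝ := fun w => v w - ∑ j, t j * Real.log (w (η j)) with hF
  have hF_ne : ∀ w ≠ w₀, F w = 0 := fun w hw => by
    have h := congrFun ht ⟨w, hw⟩
    simp only [Finset.sum_apply, Pi.smul_apply, logEmbedding_component, smul_eq_mul] at h
    have : (mult w : ℝ) * (∑ j, t j * Real.log (w (η j))) = mult w * v w := by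
      rw [← h, Finset.mul_sum]
      exact Finset.sum_congr rfl fun j _ => by ring
    rw [hF, sub_eq_zero]
    exact (mul_left_cancel₀ mult_coe_ne_zero this).symm
  have hF_sum : ∑ w, (mult w : ℝ) * F w = 0 := by
    simp only [hF, mul_sub, Finset.sum_sub_distrib, hv, Finset.mul_sum]
    rw [Finset.sum_comm]
    simp only [mul_left_comm _ (t _), ← Finset.mul_sum, sum_mult_mul_log, mul_zero,
      Finset.sum_const_zero, sub_zero]
  by_cases hw : w = w₀
  · rw [Fintype.sum_eq_single w fun w' hw' => by rw [hF_ne w' (hw ▸ hw'), mul_zero]] at hF_sum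
    exact (mul_eq_zero.mp hF_sum).resolve_left mult_coe_ne_zero
  · exact hF_ne w hw

theorem exists_apply_mul_inv_mul_prod_rpow_le
    (hgen : ∀ u : (𝓞 K)ˣ, ∃ ζ ∈ torsion K, ∃ c : ι → ℤ, u = ζ * ∏ j, η j ^ c j)
    {x : K} (hx : x ≠ 0) (e : ι → ℝ) {m : ι → ℝ}
    (hm : ∀ j (w : InfinitePlace K), Real.log (w (η j)) ≤ m j) (hm0 : ∀ j, 0 ≤ m j) :
    ∃ u : (𝓞 K)ˣ, ∀ w : InfinitePlace K,
      w (x * (((u⁻¹ : (𝓞 K)ˣ) : 𝓞 K) : K)) * ∏ j, w ((η j : 𝓞 K) : K) ^ e j ≤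
        (|Algebra.norm ℚ x| : ℝ) ^ ((1 : ℝ) / Module.finrank ℚ K) * Real.exp (∑ j, m j) := by
  set n : ℝ := (Module.finrank ℚ K : ℝ)
  set N : ℝ := |(Algebra.norm ℚ x : ℝ)|
  have hn : n ≠ 0 := Nat.cast_ne_zero.mpr Module.finrank_pos.ne'
  have hN : 0 < N := abs_pos.mpr (by exact_mod_cast Algebra.norm_ne_zero_iff.mpr hx)
  obtain ⟨t, ht⟩ := exists_eq_sum_mul_log_of_sum_mult_mul_eq_zero hgen
    (v := fun w => Real.log (w x) - Real.log N / n) (by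
      rw [← sub_eq_zero.mpr (sum_mult_mul_log_eq_log_abs_norm hx)]
      simp only [mul_sub, Finset.sum_sub_distrib, ← Finset.sum_mul]
      rw [← Nat.cast_sum, sum_mult_eq, mul_div_cancel₀ _ hn])
  let d j : ℤ := -⌊t j + e j⌋
  refine ⟨(∏ j, η j ^ d j)⁻¹, fun w => ?_⟩
  rw [inv_inv]
  have hηw j : 0 < w ((η j : 𝓞 K) : K) := pos_at_place _ w
  have hprod : 0 < ∏ j, w ((η j : 𝓞 K) : K) ^ e j :=
    Finset.prod_pos fun j _ => Real.rpow_pos_of_pos (hηw j) _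
  have hxu : 0 < w (x * ((∏ j, η j ^ d j : (𝓞 K)ˣ) : K)) := by
    rw [map_mul]
    exact mul_pos (pos_iff.mpr hx) (pos_at_place _ w)
  have hlog : Real.log (w (x * ((∏ j, η j ^ d j : (𝓞 K)ˣ) : K)) * ∏ j, w ((η j : 𝓞 K) : K) ^ e j)
      = Real.log N / n + ∑ j, Int.fract (t j + e j) * Real.log (w (η j)) := by
    rw [Real.log_mul hxu.ne' hprod.ne', map_mul,
      Real.log_mul (pos_iff.mpr hx).ne' (pos_at_place _ w).ne', log_apply_prod_zpow,
      Real.log_prod fun j _ => (Real.rpow_pos_of_pos (hηw j) _).ne',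
      show Real.log (w x) = Real.log N / n + ∑ j, t j * Real.log (w (η j)) by linarith [ht w],
      add_assoc, add_assoc, ← Finset.sum_add_distrib, ← Finset.sum_add_distrib]
    congr 1
    refine Finset.sum_congr rfl fun j _ => ?_
    rw [Real.log_rpow (hηw j), Int.fract]
    push_cast [d]
    ring
  calc _ = Real.exp (Real.log N / n + ∑ j, Int.fract (t j + e j) * Real.log (w (η j))) := by
        rw [← hlog, Real.exp_log (mul_pos hxu hprod)]
    _ ≤ Real.exp (Real.log N / n + ∑ j, m j) := by
        gcongr with j
        exact mul_log_le_of_log_le (Int.fract_nonneg _) (Int.fract_lt_one _).le (hm j w) (hm0 j)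
    _ = N ^ ((1 : ℝ) / n) * Real.exp (∑ j, m j) := by
        rw [Real.exp_add, Real.rpow_def_of_pos hN, mul_one_div]

end Units
end NumberField

theorem minkowski_unit_twist_general (K : Type*) [Field K] [NumberField K]
    (n : ℕ) (hn : n = Module.finrank ℚ K) (hn2 : 2 ≤ n)
    (𝔞 𝔮 : Ideal (𝓞 K)) (h𝔞 : 𝔞 ≠ ⊥) (h𝔮 : 𝔮 ≠ ⊥)
    (η : Fin (rank K) → (𝓞 K)ˣ)
    (hgen : ∀ u : (𝓞 K)ˣ, ∃ ζ ∈ torsion K, ∃ c : Fin (rank K) → ℤ, u = ζ * ∏ j, η j ^ c j)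
    (m : Fin (rank K) → ℕ)
    (hm : ∀ j, (m j : ℤ) = Finset.univ.sup'
      (Finset.univ_nonempty_iff.mpr inferInstance)
      (fun w : InfinitePlace K => ⌈Real.log (w ((η j : 𝓞 K) : K))⌉)) :
    ∃ a : 𝓞 K, a ∈ 𝔞 * 𝔮 ∧ a ≠ 0 ∧
      (|Algebra.norm ℚ ((a : 𝓞 K) : K)| : ℝ) <
        (2 / Real.pi) ^ (nrComplexPlaces K) * Real.sqrt |(NumberField.discr K : ℝ)| *
          (Ideal.absNorm (𝔞 * 𝔮) : ℝ) ∧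
      ∀ k : Fin (rank K) → ℤ, (∀ j, 0 ≤ k j ∧ k j < m j) →
        ∃ u : (𝓞 K)ˣ,
          Real.sqrt (∑ w : InfinitePlace K,
            (w (((a : 𝓞 K) : K) * (((u⁻¹ : (𝓞 K)ˣ) : 𝓞 K) : K)) *
              ∏ j, (w ((η j : 𝓞 K) : K)) ^ (-(k j : ℝ) / (m j : ℝ))) ^ 2) ≤
          (|Algebra.norm ℚ ((a : 𝓞 K) : K)| : ℝ) ^ ((1:ℝ) / n) *
            Real.sqrt ((rank K : ℝ) + 1) * Real.exp (∑ j, (m j : ℝ)) := by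
  subst hn
  obtain ⟨a, haI, ha0, hnorm⟩ := exists_ne_zero_mem_ideal_abs_norm_lt hn2 (mul_ne_zero h𝔞 h𝔮)
  refine ⟨a, haI, ha0, hnorm, fun k _ => ?_⟩
  have hlog j (w : InfinitePlace K) : Real.log (w ((η j : 𝓞 K) : K)) ≤ m j :=
    (Int.le_ceil _).trans (by exact_mod_cast (hm j).symm ▸ Finset.le_sup' _ (Finset.mem_univ w))
  obtain ⟨u, hu⟩ := exists_apply_mul_inv_mul_prod_rpow_le hgen
    (RingOfIntegers.coe_ne_zero_iff.mpr ha0) (fun j => -(k j : ℝ) / m j) hlog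
    (fun j => Nat.cast_nonneg _)
  refine ⟨u, (sqrt_sum_sq_le_sqrt_card_mul fun w =>
    (abs_of_nonneg (by positivity)).trans_le (hu w)).trans_eq ?_⟩
  rw [card_infinitePlace_eq_rank_add_one]
  push_cast
  ring

/-- By Minkowski's lattice point theorem there is a nonzero `a ∈ 𝔞𝔮` with
`|N(a)| < (2/π)^{r₂}·√|d_K|·N(𝔞𝔮)`, and for every integer vector
`k ∈ ∏_j [0, m_j)` there is a unit `u` such that the twisted embedding of `a·u⁻¹`
satisfies `‖φ(a·u⁻¹)·β_k‖ ≤ |N(a)|^{1/n}·√(r+1)·e^{∑ m_j}`. -/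
theorem minkowski_unit_twist (K : Type*) [Field K] [NumberField K]
    (n : ℕ) (hn : n = Module.finrank ℚ K) (hn2 : 2 ≤ n)
    (𝔞 𝔮 : Ideal (𝓞 K)) (h𝔞 : 𝔞 ≠ ⊥) (h𝔮 : 𝔮 ≠ ⊥) (hcop : 𝔞 ⊔ 𝔮 = ⊤)
    (η : Fin (rank K) → (𝓞 K)ˣ)
    (hindep : ∀ c : Fin (rank K) → ℤ, (∏ j, η j ^ c j) ∈ torsion K → c = 0)
    (hgen : ∀ u : (𝓞 K)ˣ, ∃ ζ ∈ torsion K, ∃ c : Fin (rank K) → ℤ, u = ζ * ∏ j, η j ^ c j)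
    (m : Fin (rank K) → ℕ) (hm1 : ∀ j, 1 ≤ m j)
    (hm : ∀ j, (m j : ℤ) = Finset.univ.sup'
      (Finset.univ_nonempty_iff.mpr inferInstance)
      (fun w : InfinitePlace K => ⌈Real.log (w ((η j : 𝓞 K) : K))⌉)) :
    ∃ a : 𝓞 K, a ∈ 𝔞 * 𝔮 ∧ a ≠ 0 ∧
      (|Algebra.norm ℚ ((a : 𝓞 K) : K)| : ℝ) <
        (2 / Real.pi) ^ (nrComplexPlaces K) * Real.sqrt |(NumberField.discr K : ℝ)| *
          (Ideal.absNorm (𝔞 * 𝔮) : ℝ) ∧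
      ∀ k : Fin (rank K) → ℤ, (∀ j, 0 ≤ k j ∧ k j < m j) →
        ∃ u : (𝓞 K)ˣ,
          Real.sqrt (∑ w : InfinitePlace K,
            (w (((a : 𝓞 K) : K) * (((u⁻¹ : (𝓞 K)ˣ) : 𝓞 K) : K)) *
              ∏ j, (w ((η j : 𝓞 K) : K)) ^ (-(k j : ℝ) / (m j : ℝ))) ^ 2) ≤
          (|Algebra.norm ℚ ((a : 𝓞 K) : K)| : ℝ) ^ ((1:ℝ) / n) *
            Real.sqrt ((rank K : ℝ) + 1) * Real.exp (∑ j, (m j : ℝ)) :=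
  minkowski_unit_twist_general K n hn hn2 𝔞 𝔮 h𝔞 h𝔮 η hgen m hm
end
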